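/- arXiv:2005.01563 — 7 statements merged into one kernel-verified Lean document; each statement's English description precedes it below -/
import Mathlib

section
/- Let C be a Cartesian closed category, A and X objects of C, and g : A → X^A a morphism that is point-surjective (i.e., for every point q : 1 → X^A there exists p : 1 → A with g ∘ p = q). Then every endomorphism f : X → X has a fixed point, i.e., there is a point x : 1 → X with f ∘ x = x. -/
/-! Cantor's diagonal argument, internalised: for `f : X ⟶ X` the morphism
`a ↦ f (g a a)` has a name, which by point-surjectivity is `g p` for some point `p`; then
`g p p = f (g p p)`. -/

open CategoryTheory CategoryTheory.Limits MonoidalCategory CartesianClosed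

namespace CategoryTheory.MonoidalClosed

open CartesianMonoidalCategory

variable {C : Type*} [Category C] [CartesianMonoidalCategory C] [MonoidalClosed C] {A X : C}

lemma lift_curry'_comp_ihom_ev_app (p : 𝟙_ C ⟶ A) (h : A ⟶ X) :
    lift p (curry' h) ≫ (ihom.ev A).app X = p ≫ h := by
  have hp : lift p (𝟙 (𝟙_ C)) ≫ (ρ_ A).hom = p := by
    rw [rightUnitor_hom, lift_fst]
  rw [← Category.id_comp (curry' h), ← lift_whiskerLeft_assoc, whiskerLeft_curry'_ihom_ev_app,
    ← Category.assoc, hp]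

end CategoryTheory.MonoidalClosed

theorem lawvere_fixed_point {C : Type*} [Category C] [CartesianMonoidalCategory C]
    [MonoidalClosed C] (A X : C) (g : A ⟶ A ⟹ X)
    (hg : ∀ q : 𝟙_ C ⟶ A ⟹ X, ∃ p : 𝟙_ C ⟶ A, p ≫ g = q)
    (f : X ⟶ X) : ∃ x : 𝟙_ C ⟶ X, x ≫ f = x := by
  let diagonal : A ⟶ X := CartesianMonoidalCategory.lift (𝟙 A) g ≫ (ihom.ev A).app X
  obtain ⟨p, hp⟩ := hg (MonoidalClosed.curry' (diagonal ≫ f))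
  refine ⟨p ≫ diagonal, ?_⟩
  calc (p ≫ diagonal) ≫ f
      = CartesianMonoidalCategory.lift p (p ≫ g) ≫ (ihom.ev A).app X := by
        rw [Category.assoc, hp, MonoidalClosed.lift_curry'_comp_ihom_ev_app]
    _ = p ≫ diagonal := by
        rw [CartesianMonoidalCategory.comp_lift_assoc, Category.comp_id]
end

section
/- If X is a topological space and g : A → C(A, X) is a function from a topological space A to continuous maps A → X such that the diagonal a ↦ g a a is continuous and g is surjective, then every continuous map f : X → X has a fixed point. -/
theorem lawvere_topological {A X : Type*} [TopologicalSpace A] [TopologicalSpace X]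
    (g : A → C(A, X)) (hg : Function.Surjective g)
    (hdiag : Continuous fun a => g a a)
    (f : X → X) (hf : Continuous f) : ∃ x : X, f x = x := by
  obtain ⟨a, ha⟩ := hg ⟨fun a => f (g a a), hf.comp hdiag⟩
  exact ⟨g a a, (DFunLike.congr_fun ha a).symm⟩
end

section
/- The topology on 2^{ω₁} generated by the sets {x : ∀ β < α, x β = s β}, where α ranges over countable ordinals and s over functions {β : β < α} → Bool, is not compact. -/
open Cardinal

abbrev OmegaOneSeq : Type 1 := {β : Ordinal // β < (aleph 1).ord} → Bool

/-- The topology on `2^{ω₁}` whose basic open sets fix the values on a countable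
initial segment `{β : β < α}` for some `α < ω₁`. -/
def fineTop : TopologicalSpace OmegaOneSeq :=
  TopologicalSpace.generateFrom
    { U | ∃ (α : Ordinal) (_ : α < (aleph 1).ord)
        (s : ∀ β : {β : Ordinal // β < (aleph 1).ord}, β.1 < α → Bool),
        U = { x : OmegaOneSeq | ∀ (β : {β : Ordinal // β < (aleph 1).ord}) (h : β.1 < α),
          x β = s β h } }

/-!
Restricting a point of `2^{ω₁}` to its first `ω` coordinates is a surjection onto `2^ω`, and
each of its fibres is a basic open set of `fineTop`, so it is continuous for the discrete
topology on `2^ω`. A compact space cannot map continuously onto an infinite discrete space.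
-/

open Ordinal Topology

theorem not_compactSpace_of_surjective_continuous_bot {X Y : Type*} [TopologicalSpace X]
    [Infinite Y] {f : X → Y} (hf : Function.Surjective f) (hcont : Continuous[‹_›, ⊥] f) :
    ¬ CompactSpace X := by
  intro _
  let _ : TopologicalSpace Y := ⊥
  have : DiscreteTopology Y := ⟨rfl⟩
  have : CompactSpace Y := hf.compactSpace hcont
  have : Finite Y := finite_of_compact_of_discrete
  exact not_finite Y

theorem omega0_lt_ord_aleph_one : ω < (aleph 1).ord :=
  omega0_lt_ord.2 aleph0_lt_aleph_one

theorem continuous_restrict_fineTop {α : Ordinal} (hα : α < (aleph 1).ord) :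
    Continuous[fineTop, ⊥]
      (Subtype.restrict fun β : {β : Ordinal // β < (aleph 1).ord} ↦ β.1 < α) := by
  let _ : TopologicalSpace OmegaOneSeq := fineTop
  let _ : TopologicalSpace ({β : {β : Ordinal // β < (aleph 1).ord} // β.1 < α} → Bool) := ⊥
  have : DiscreteTopology ({β : {β : Ordinal // β < (aleph 1).ord} // β.1 < α} → Bool) := ⟨rfl⟩
  refine continuous_discrete_rng.2 fun s ↦ TopologicalSpace.GenerateOpen.basic _
    ⟨α, hα, fun β h ↦ s ⟨β, h⟩, ?_⟩
  ext x
  simp [funext_iff]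

instance infinite_coords_lt_omega0 :
    Infinite {β : {β : Ordinal // β < (aleph 1).ord} // β.1 < ω} :=
  Infinite.of_injective
    (fun n : ℕ ↦ ⟨⟨n, (natCast_lt_omega0 n).trans omega0_lt_ord_aleph_one⟩, natCast_lt_omega0 n⟩)
    fun m n h ↦ by simpa using h

/-- The fine ("countable initial segment") topology on `2^{ω₁}` is not compact. -/
theorem fineTop_not_compact : ¬ @CompactSpace OmegaOneSeq fineTop :=
  @not_compactSpace_of_surjective_continuous_bot _ _ fineTop _ _ (Subtype.surjective_restrict _)
    (continuous_restrict_fineTop omega0_lt_ord_aleph_one)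
end

section
/- Every continuous function f : 2^{ω₁} → ℝ, where 2^{ω₁} carries the product topology of discrete two-point spaces indexed by ω₁, depends on only countably many coordinates: there exists a countable set S ⊆ ω₁ such that for all x, y with x|_S = y|_S we have f x = f y. -/
open Cardinal

/- Compactness of the product lets one cover it by finitely many basic open cylinders on each of
which `f` oscillates by less than `ε`; the finitely many coordinates they constrain then control `f`
up to `ε`. Taking `ε = 1/(n+1)` for all `n` leaves countably many coordinates controlling `f`
exactly. -/

section ProductOfCompact

variable {ι : Type*} {X : ι → Type*} [∀ i, TopologicalSpace (X i)] [CompactSpace (Π i, X i)]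

theorem Continuous.exists_finset_dist_lt_of_forall_mem_eq {E : Type*} [PseudoMetricSpace E]
    {f : (Π i, X i) → E} (hf : Continuous f) {ε : ℝ} (hε : 0 < ε) :
    ∃ G : Finset ι, ∀ x y, (∀ i ∈ G, x i = y i) → dist (f x) (f y) < ε := by
  classical
  have hcyl : ∀ x : Π i, X i, ∃ (F : Finset ι) (u : ∀ i, Set (X i)),
      (∀ i ∈ F, IsOpen (u i) ∧ x i ∈ u i) ∧ (F : Set ι).pi u ⊆ f ⁻¹' Metric.ball (f x) (ε / 2) :=
    fun x => isOpen_pi_iff.1 (Metric.isOpen_ball.preimage hf) x (Metric.mem_ball_self (by positivity))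
  choose F u hu hsub using hcyl
  obtain ⟨T, hT⟩ := isCompact_univ.elim_finite_subcover (fun t => (F t : Set ι).pi (u t))
    (fun t => isOpen_set_pi (F t).finite_toSet fun i hi => (hu t i hi).1)
    (fun x _ => Set.mem_iUnion.2 ⟨x, fun i hi => (hu x i hi).2⟩)
  refine ⟨T.biUnion F, fun x y hxy => ?_⟩
  obtain ⟨t, ht, hxt⟩ := Set.mem_iUnion₂.1 (hT (Set.mem_univ x))
  have hyt : y ∈ (F t : Set ι).pi (u t) := fun i hi =>
    hxy i (Finset.mem_biUnion.2 ⟨t, ht, hi⟩) ▸ hxt i hi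
  calc dist (f x) (f y) ≤ dist (f x) (f t) + dist (f y) (f t) := dist_triangle_right _ _ _
    _ < ε / 2 + ε / 2 := add_lt_add (hsub t hxt) (hsub t hyt)
    _ = ε := add_halves ε

theorem Continuous.exists_countable_dependsOn {E : Type*} [MetricSpace E]
    {f : (Π i, X i) → E} (hf : Continuous f) :
    ∃ S : Set ι, S.Countable ∧ DependsOn f S := by
  choose G hG using fun n : ℕ =>
    hf.exists_finset_dist_lt_of_forall_mem_eq (Nat.one_div_pos_of_nat (n := n))
  refine ⟨⋃ n, G n, Set.countable_iUnion fun n => (G n).countable_toSet, fun x y hxy => ?_⟩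
  refine eq_of_forall_dist_le fun ε hε => ?_
  obtain ⟨n, hn⟩ := exists_nat_one_div_lt hε
  exact (hG n x y fun i hi => hxy i (Set.mem_iUnion.2 ⟨n, hi⟩)).le.trans hn.le

end ProductOfCompact

/-- Every continuous real-valued function on the product space `2^{ω₁}` depends on
only countably many coordinates. -/
theorem continuous_real_function_depends_on_countably_many_coordinates
    (f : ({β : Ordinal // β < (aleph 1).ord} → Bool) → ℝ)
    (hf : Continuous f) :
    ∃ S : Set {β : Ordinal // β < (aleph 1).ord}, S.Countable ∧
      ∀ x y : {β : Ordinal // β < (aleph 1).ord} → Bool,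
        (∀ i ∈ S, x i = y i) → f x = f y := by
  obtain ⟨S, hS, hfS⟩ := hf.exists_countable_dependsOn
  exact ⟨S, hS, fun _ _ hxy => hfS hxy⟩
end

section
/- Let X be a compact metric space and let (f_γ) be a family of functions f_γ : 2^γ → X for ordinals γ < β (β a countable limit ordinal) that are uniformly equicontinuous with a common Lipschitz constant with respect to compatible metrics, and suppose the induced function F : 2^β → X satisfies a Cauchy condition along cofinal sequences: for every x ∈ 2^β and every increasing sequence γ_n → β, the sequence F(x restricted to γ_n, extended constantly) is Cauchy with modulus independent of x. Then F is continuous on 2^β with the product topology. -/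
/-!
Since `β` is a countable limit ordinal it has a cofinal strictly increasing sequence `γ n`.
Along it, the stages `x ↦ f (γ n) (x ↾ γ n)` are continuous (Lipschitz for a metric inducing the
product topology), and the Cauchy condition, uniform in `x`, makes them converge uniformly to `F`.
-/

open Filter Cardinal

theorem exists_strictMono_tendsto_atTop (α : Type*) [LinearOrder α] [Nonempty α] [NoMaxOrder α]
    [Countable α] : ∃ u : ℕ → α, StrictMono u ∧ Tendsto u atTop atTop := by
  obtain ⟨v, -, hv⟩ := exists_seq_monotone_tendsto_atTop_atTop α
  obtain ⟨φ, hφ, hvφ⟩ := strictMono_subseq_of_tendsto_atTop hv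
  exact ⟨v ∘ φ, hvφ, hv.comp hφ.tendsto_atTop⟩

theorem Ordinal.exists_strictMono_cofinal_nat {β : Ordinal} (hβ : Order.IsSuccLimit β)
    (hβc : β.card ≤ ℵ₀) :
    ∃ γ : ℕ → Ordinal, StrictMono γ ∧ (∀ n, γ n < β) ∧ ∀ δ < β, ∃ n, δ ≤ γ n := by
  have : Countable (Set.Iio β) := by
    rwa [← mk_le_aleph0_iff, Cardinal.mk_Iio_ordinal, lift_le_aleph0]
  have : Nonempty (Set.Iio β) := ⟨⟨0, hβ.pos⟩⟩
  have : NoMaxOrder (Set.Iio β) :=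
    ⟨fun δ => ⟨⟨Order.succ δ, hβ.succ_lt δ.2⟩, Order.lt_succ δ.1⟩⟩
  obtain ⟨u, hu, hlim⟩ := exists_strictMono_tendsto_atTop (Set.Iio β)
  exact ⟨fun n => u n, (Subtype.strictMono_coe _).comp hu, fun n => (u n).2,
    fun δ hδ => (hlim.eventually_ge_atTop ⟨δ, hδ⟩).exists⟩

theorem LipschitzWith.continuous_of_toTopologicalSpace_eq {α β : Type*} [t : TopologicalSpace α]
    [PseudoEMetricSpace β] (m : PseudoEMetricSpace α) (hm : m.toUniformSpace.toTopologicalSpace = t)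
    {K : NNReal} {f : α → β} (hf : @LipschitzWith α β m _ K f) : Continuous f :=
  hm ▸ @LipschitzWith.continuous α β m _ K f hf

theorem continuity_of_induced_map_on_two_pow_limit_general
    (X : Type*) [MetricSpace X]
    (β : Ordinal) (hβ : Order.IsSuccLimit β) (hβc : β.card ≤ aleph0)
    (m : ∀ γ, γ < β → MetricSpace ({δ : Ordinal // δ < γ} → Bool))
    (hm : ∀ γ (h : γ < β),
      (m γ h).toUniformSpace.toTopologicalSpace =
        (Pi.topologicalSpace : TopologicalSpace ({δ : Ordinal // δ < γ} → Bool)))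
    (f : ∀ γ, γ < β → ({δ : Ordinal // δ < γ} → Bool) → X)
    (K : NNReal)
    (hLip : ∀ γ (h : γ < β),
      @LipschitzWith _ X (m γ h).toPseudoMetricSpace.toPseudoEMetricSpace _ K (f γ h))
    (F : ({δ : Ordinal // δ < β} → Bool) → X)
    (hF : ∀ (x : {δ : Ordinal // δ < β} → Bool) (γ : ℕ → Ordinal),
      StrictMono γ → ∀ (hlt : ∀ n, γ n < β), (∀ δ, δ < β → ∃ n, δ ≤ γ n) →
      Tendsto (fun n => f (γ n) (hlt n) (fun δ => x ⟨δ.1, δ.2.trans (hlt n)⟩))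
        atTop (nhds (F x)))
    (hCauchy : ∀ ε : ℝ, 0 < ε → ∃ N : ℕ,
      ∀ (x : {δ : Ordinal // δ < β} → Bool) (γ : ℕ → Ordinal),
      StrictMono γ → ∀ (hlt : ∀ n, γ n < β), (∀ δ, δ < β → ∃ n, δ ≤ γ n) →
      ∀ p q, N ≤ p → N ≤ q →
        dist (f (γ p) (hlt p) (fun δ => x ⟨δ.1, δ.2.trans (hlt p)⟩))
             (f (γ q) (hlt q) (fun δ => x ⟨δ.1, δ.2.trans (hlt q)⟩)) ≤ ε) :
    Continuous F := by
  obtain ⟨γ, hmono, hlt, hcof⟩ := Ordinal.exists_strictMono_cofinal_nat hβ hβc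
  set g : ℕ → ({δ : Ordinal // δ < β} → Bool) → X :=
    fun n x => f (γ n) (hlt n) (fun δ => x ⟨δ.1, δ.2.trans (hlt n)⟩)
  have hg : ∀ n, Continuous (g n) := fun n =>
    ((hLip _ _).continuous_of_toTopologicalSpace_eq _ (hm _ _)).comp
      (continuous_pi fun δ => continuous_apply _)
  have hgCauchy : UniformCauchySeqOn g atTop Set.univ := by
    refine Metric.uniformCauchySeqOn_iff.2 fun ε hε => ?_
    obtain ⟨N, hN⟩ := hCauchy (ε / 2) (half_pos hε)
    exact ⟨N, fun p hp q hq x _ => (hN x γ hmono hlt hcof p q hp hq).trans_lt (half_lt_self hε)⟩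
  have hgF : TendstoUniformly g F atTop := tendstoUniformlyOn_univ.1 <|
    hgCauchy.tendstoUniformlyOn_of_tendsto fun x _ => hF x γ hmono hlt hcof
  exact hgF.continuous (Eventually.of_forall hg).frequently

/-- Transfinite continuity step: if the stage functions `f γ` (γ < β, β a countable
limit ordinal) are uniformly Lipschitz with a common constant `K` with respect to
metrics compatible with the product topologies, and the induced function `F` on `2^β`
is the limit of the stages along every cofinal sequence, with a Cauchy condition whose
modulus is uniform in the point, then `F` is continuous for the product topology. -/
theorem continuity_of_induced_map_on_two_pow_limit
    (X : Type*) [MetricSpace X] [CompactSpace X]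
    (β : Ordinal) (hβ : Order.IsSuccLimit β) (hβc : β.card ≤ aleph0)
    (m : ∀ γ, γ < β → MetricSpace ({δ : Ordinal // δ < γ} → Bool))
    (hm : ∀ γ (h : γ < β),
      (m γ h).toUniformSpace.toTopologicalSpace =
        (Pi.topologicalSpace : TopologicalSpace ({δ : Ordinal // δ < γ} → Bool)))
    (f : ∀ γ, γ < β → ({δ : Ordinal // δ < γ} → Bool) → X)
    (K : NNReal)
    (hLip : ∀ γ (h : γ < β),
      @LipschitzWith _ X (m γ h).toPseudoMetricSpace.toPseudoEMetricSpace _ K (f γ h))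
    (F : ({δ : Ordinal // δ < β} → Bool) → X)
    (hF : ∀ (x : {δ : Ordinal // δ < β} → Bool) (γ : ℕ → Ordinal),
      StrictMono γ → ∀ (hlt : ∀ n, γ n < β), (∀ δ, δ < β → ∃ n, δ ≤ γ n) →
      Tendsto (fun n => f (γ n) (hlt n) (fun δ => x ⟨δ.1, δ.2.trans (hlt n)⟩))
        atTop (nhds (F x)))
    (hCauchy : ∀ ε : ℝ, 0 < ε → ∃ N : ℕ,
      ∀ (x : {δ : Ordinal // δ < β} → Bool) (γ : ℕ → Ordinal),
      StrictMono γ → ∀ (hlt : ∀ n, γ n < β), (∀ δ, δ < β → ∃ n, δ ≤ γ n) →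
      ∀ p q, N ≤ p → N ≤ q →
        dist (f (γ p) (hlt p) (fun δ => x ⟨δ.1, δ.2.trans (hlt p)⟩))
             (f (γ q) (hlt q) (fun δ => x ⟨δ.1, δ.2.trans (hlt q)⟩)) ≤ ε) :
    Continuous F :=
  continuity_of_induced_map_on_two_pow_limit_general X β hβ hβc m hm f K hLip F hF hCauchy
end

section
/- Every continuous function f : 2^{ω₁} → X into a metric space X, where 2^{ω₁} has the product topology, is locally constant on cones of countable length eventually: there exists a countable ordinal α such that f(x) depends only on the restriction of x to {β : β < α}. -/
/-! A continuous map on the compact space `2^{ω₁}` is uniformly continuous, so for each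
`ε = 1/(n+1)` finitely many coordinates determine `f` up to `ε`. The countably many coordinates
obtained this way determine `f` exactly, and since `ω₁` is regular they all lie below some
countable ordinal `α`. -/

open Cardinal Ordinal Set Filter Uniformity

section DiscretePi

variable {ι α X : Type*} [UniformSpace α] [DiscreteUniformity α]

theorem Pi.uniformity_hasBasis_eqOn_finite :
    (𝓤 (ι → α)).HasBasis Set.Finite fun I => {p : (ι → α) × (ι → α) | EqOn p.1 p.2 I} := by
  rw [Pi.uniformity]
  simp only [DiscreteUniformity.eq_principal_setRelId, comap_principal]
  convert hasBasis_iInf_principal_finite _ using 2 with I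
  ext p
  simp [EqOn]

theorem UniformContinuous.exists_finite_forall_eqOn_dist_lt [PseudoMetricSpace X]
    {f : (ι → α) → X} (hf : UniformContinuous f) {ε : ℝ} (hε : 0 < ε) :
    ∃ I : Set ι, I.Finite ∧ ∀ x y, EqOn x y I → dist (f x) (f y) < ε := by
  obtain ⟨I, hI, hIε⟩ :=
    (Pi.uniformity_hasBasis_eqOn_finite.tendsto_iff Metric.uniformity_basis_dist).1 hf ε hε
  exact ⟨I, hI, fun x y hxy => hIε (x, y) hxy⟩

theorem UniformContinuous.exists_countable_forall_eqOn_eq [MetricSpace X]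
    {f : (ι → α) → X} (hf : UniformContinuous f) :
    ∃ S : Set ι, S.Countable ∧ ∀ x y, EqOn x y S → f x = f y := by
  choose I hI hIε using fun n : ℕ =>
    hf.exists_finite_forall_eqOn_dist_lt (Nat.one_div_pos_of_nat (n := n))
  refine ⟨⋃ n, I n, countable_iUnion fun n => (hI n).countable, fun x y hxy => ?_⟩
  refine eq_of_forall_dist_le fun ε hε => ?_
  obtain ⟨n, hn⟩ := exists_nat_one_div_lt hε
  exact (hIε n x y (hxy.mono (subset_iUnion I n))).trans hn |>.le

end DiscretePi

theorem Ordinal.exists_lt_omega_one_forall_lt_of_countable {S : Set Ordinal} (hS : S.Countable)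
    (hS₁ : ∀ β ∈ S, β < ω₁) : ∃ α < ω₁, ∀ β ∈ S, β < α := by
  have := hS.to_subtype
  refine ⟨⨆ β : S, Order.succ β.1, iSup_lt_omega_one fun β => ?_, fun β hβ => ?_⟩
  · exact (isSuccLimit_omega 1).succ_lt (hS₁ β β.2)
  · exact (Order.lt_succ β).trans_le (Ordinal.le_iSup (fun β : S => Order.succ β.1) ⟨β, hβ⟩)

/-- Every continuous map from the product space `2^{ω₁}` to a metric space depends
only on the coordinates below some countable ordinal `α`. -/
theorem continuous_map_on_two_pow_omegaOne_depends_on_initial_segment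
    (X : Type*) [MetricSpace X]
    (f : ({β : Ordinal // β < (aleph 1).ord} → Bool) → X)
    (hf : Continuous f) :
    ∃ α : Ordinal, α < (aleph 1).ord ∧
      ∀ x y : {β : Ordinal // β < (aleph 1).ord} → Bool,
        (∀ β : {β : Ordinal // β < (aleph 1).ord}, β.1 < α → x β = y β) →
        f x = f y := by
  obtain ⟨S, hS, hSf⟩ :=
    (CompactSpace.uniformContinuous_of_continuous hf).exists_countable_forall_eqOn_eq
  obtain ⟨α, hα, hSα⟩ := exists_lt_omega_one_forall_lt_of_countable (hS.image Subtype.val)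
    (by rintro _ ⟨β, -, rfl⟩; simpa using β.2)
  refine ⟨α, by rwa [ord_aleph], fun x y hxy => hSf x y fun β hβ => ?_⟩
  exact hxy β (hSα _ (mem_image_of_mem _ hβ))
end

section
/- Let A be a topological space, X a topological space, and suppose φ : A → C(A, X) is surjective with the evaluation map (a, b) ↦ φ a b continuous on A × A. Then for every continuous f : X → X, the map a ↦ f (φ a a) is continuous, equals φ c for some c ∈ A, and x₀ := φ c c satisfies f x₀ = x₀. -/
/-- The explicit fixed point in the Lawvere argument: if `φ : A → C(A, X)` is
surjective and evaluation `(a, b) ↦ φ a b` is jointly continuous, then for every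
continuous `f : X → X` the map `a ↦ f (φ a a)` is continuous, equals `φ c` for
some `c`, and `x₀ := φ c c` is a fixed point of `f`. -/
theorem lawvere_explicit_fixed_point
    {A X : Type*} [TopologicalSpace A] [TopologicalSpace X]
    (φ : A → C(A, X)) (hφ : Function.Surjective φ)
    (heval : Continuous fun p : A × A => φ p.1 p.2)
    (f : X → X) (hf : Continuous f) :
    Continuous (fun a => f (φ a a)) ∧
    ∃ c : A, (∀ a, φ c a = f (φ a a)) ∧ f (φ c c) = φ c c := by
  have hdiag : Continuous fun a => f (φ a a) := hf.comp (heval.comp continuous_diag)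
  obtain ⟨c, hc⟩ := hφ ⟨_, hdiag⟩
  have hc_apply : ∀ a, φ c a = f (φ a a) := DFunLike.congr_fun hc
  exact ⟨hdiag, c, hc_apply, (hc_apply c).symm⟩
end
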